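/- If t is a positive integer with t ≡ 4 or 10 (mod 12), then c₃(t) = (t³ − 16t² + 76t − 112)/6. -/

import Mathlib

/-!
Every 3×3 magic square is Lucas's square with centre `c` and offsets `a`, `b` (entries `c`,
`c ± a`, `c ± b`, `c ± (a + b)`, `c ± (a - b)`). Its entries are distinct iff none of
`a, b, a ± b, 2a ± b, a ± 2b` vanishes, and lie in `(0, t)` iff `|a| + |b| < c < t - |a| - |b|`.
Forgetting signs, `c₃(t)` is four times the number of triples `(c, x, y)` of positive integers
with `x + y < c < t - x - y` and `(x, y)` off the lines `y = x`, `y = 2x`, `x = 2y`. The triples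
on a line `(x, y) = (αz, βz)` are the pairs `(c, z)` with `dz < c < t - dz`, `d = α + β`.
Shifting `x` (resp. `z`) by one gives recurrences in `t` of step `2` (resp. `2d`), which for
`t = 6r + 4` solve to polynomials in `r`.
-/

/-- A 3×3 magic square with entries bounded above (strictly) by `t`: pairwise distinct
positive integer entries less than `t`, with all row sums, column sums, and both main
diagonal sums equal to one another. -/
def IsBoundedMagicSquare3 (t : ℕ) (M : Matrix (Fin 3) (Fin 3) ℕ) : Prop :=
  (∀ i j, 0 < M i j ∧ M i j < t) ∧
  (Function.Injective fun p : Fin 3 × Fin 3 => M p.1 p.2) ∧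
  ∃ s, (∀ i, ∑ j, M i j = s) ∧ (∀ j, ∑ i, M i j = s) ∧
    M 0 0 + M 1 1 + M 2 2 = s ∧ M 0 2 + M 1 1 + M 2 0 = s

/-- The number of 3×3 magic squares all of whose entries are less than `t`. -/
noncomputable def c3 (t : ℕ) : ℕ :=
  Set.ncard {M : Matrix (Fin 3) (Fin 3) ℕ | IsBoundedMagicSquare3 t M}

open Finset

section Lucas

variable {R : Type*} [CommRing R]

def lucasMatrix (c a b : R) : Matrix (Fin 3) (Fin 3) R :=
  !![c + a, c - a - b, c + b;
     c - a + b, c, c + a - b;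
     c - b, c + a + b, c - a]

theorem eq_lucasMatrix {M : Matrix (Fin 3) (Fin 3) R} {s : R}
    (hrow : ∀ i, ∑ j, M i j = s) (hcol : ∀ j, ∑ i, M i j = s)
    (hdiag : M 0 0 + M 1 1 + M 2 2 = s) (hanti : M 0 2 + M 1 1 + M 2 0 = s) :
    M = lucasMatrix (M 1 1) (M 0 0 - M 1 1) (M 0 2 - M 1 1) := by
  have hr0 := hrow 0
  have hr2 := hrow 2
  have hc0 := hcol 0
  have hc1 := hcol 1
  have hc2 := hcol 2
  simp only [Fin.sum_univ_three] at hr0 hr2 hc0 hc1 hc2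
  -- the middle column and both diagonals cover the top and bottom rows once and the centre thrice
  have hs : s = 3 * M 1 1 := by linear_combination hr0 + hr2 - hc1 - hdiag - hanti
  have e01 : M 0 1 = M 1 1 - (M 0 0 - M 1 1) - (M 0 2 - M 1 1) := by
    linear_combination hr0 + hs
  have e10 : M 1 0 = M 1 1 - (M 0 0 - M 1 1) + (M 0 2 - M 1 1) := by
    linear_combination hc0 - hanti
  have e12 : M 1 2 = M 1 1 + (M 0 0 - M 1 1) - (M 0 2 - M 1 1) := by
    linear_combination hc2 - hdiag
  have e20 : M 2 0 = M 1 1 - (M 0 2 - M 1 1) := by linear_combination hanti + hs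
  have e21 : M 2 1 = M 1 1 + (M 0 0 - M 1 1) + (M 0 2 - M 1 1) := by
    linear_combination hr2 - hanti - hdiag - hs
  have e22 : M 2 2 = M 1 1 - (M 0 0 - M 1 1) := by linear_combination hdiag + hs
  ext i j
  fin_cases i <;> fin_cases j <;> simp [lucasMatrix, e01, e10, e12, e20, e21, e22]

end Lucas

theorem card_filter_natAbs_mem {α : Type*} [DecidableEq α] (s : Finset α) (n : ℕ)
    (U : Finset (α × ℕ × ℕ)) (hU : ∀ p ∈ U, p.1 ∈ s ∧ p.2.1 ∈ Icc 1 n ∧ p.2.2 ∈ Icc 1 n) :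
    #{q ∈ s ×ˢ Icc (-n : ℤ) n ×ˢ Icc (-n : ℤ) n |
      (q.1, q.2.1.natAbs, q.2.2.natAbs) ∈ U} = 4 * #U := by
  set T := {q ∈ s ×ˢ Icc (-n : ℤ) n ×ˢ Icc (-n : ℤ) n | (q.1, q.2.1.natAbs, q.2.2.natAbs) ∈ U}
  have hmaps : Set.MapsTo (fun q : α × ℤ × ℤ => (q.1, q.2.1.natAbs, q.2.2.natAbs)) T U :=
    fun q hq => (mem_filter.1 hq).2
  rw [card_eq_sum_card_fiberwise hmaps, mul_comm, ← smul_eq_mul, ← sum_const]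
  refine sum_congr rfl fun ⟨c, x, y⟩ hp => ?_
  obtain ⟨hc, hx, hy⟩ := hU _ hp
  simp only [mem_Icc] at hx hy
  have hfiber : {q ∈ T | (q.1, q.2.1.natAbs, q.2.2.natAbs) = (c, x, y)} =
      ({c} : Finset α) ×ˢ ({(x : ℤ), -(x : ℤ)} ×ˢ {(y : ℤ), -(y : ℤ)}) := by
    ext ⟨c', a, b⟩
    simp only [T, mem_filter, mem_product, mem_Icc, mem_singleton, mem_insert, Prod.mk.injEq]
    constructor
    · rintro ⟨-, rfl, ha, hb⟩
      exact ⟨rfl, by omega, by omega⟩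
    · rintro ⟨rfl, ha, hb⟩
      have hab : a.natAbs = x ∧ b.natAbs = y := by omega
      rw [hab.1, hab.2]
      exact ⟨⟨⟨hc, by omega, by omega⟩, hp⟩, rfl, rfl, rfl⟩
  rw [hfiber, card_product, card_product, card_singleton, card_pair (by omega),
    card_pair (by omega)]

def lucasTriples (t : ℕ) : Finset (ℕ × ℕ × ℕ) :=
  {p ∈ range t ×ˢ range t ×ˢ range t |
    0 < p.2.1 ∧ 0 < p.2.2 ∧ p.2.1 + p.2.2 < p.1 ∧ p.1 + p.2.1 + p.2.2 < t}

def distinctLucasTriples (t : ℕ) : Finset (ℕ × ℕ × ℕ) :=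
  {p ∈ lucasTriples t | p.2.1 ≠ p.2.2 ∧ p.2.2 ≠ 2 * p.2.1 ∧ p.2.1 ≠ 2 * p.2.2}

noncomputable def signedLucasTriples (t : ℕ) : Finset (ℕ × ℤ × ℤ) :=
  {q ∈ range t ×ˢ Icc (-t : ℤ) t ×ˢ Icc (-t : ℤ) t |
    (q.1, q.2.1.natAbs, q.2.2.natAbs) ∈ distinctLucasTriples t}

theorem mem_lucasTriples {t : ℕ} {p : ℕ × ℕ × ℕ} :
    p ∈ lucasTriples t ↔
      0 < p.2.1 ∧ 0 < p.2.2 ∧ p.2.1 + p.2.2 < p.1 ∧ p.1 + p.2.1 + p.2.2 < t := by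
  simp only [lucasTriples, mem_filter, mem_product, mem_range]
  omega

theorem mem_signedLucasTriples {t c : ℕ} {a b : ℤ} :
    (c, a, b) ∈ signedLucasTriples t ↔
      0 < a.natAbs ∧ 0 < b.natAbs ∧ a.natAbs ≠ b.natAbs ∧ b.natAbs ≠ 2 * a.natAbs ∧
        a.natAbs ≠ 2 * b.natAbs ∧ a.natAbs + b.natAbs < c ∧ c + a.natAbs + b.natAbs < t := by
  simp only [signedLucasTriples, distinctLucasTriples, mem_filter, mem_lucasTriples,
    mem_product, mem_range, mem_Icc]
  omega

theorem card_signedLucasTriples (t : ℕ) :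
    #(signedLucasTriples t) = 4 * #(distinctLucasTriples t) :=
  card_filter_natAbs_mem _ _ _ fun p hp => by
    simp only [distinctLucasTriples, mem_filter, mem_lucasTriples] at hp
    simp only [mem_range, mem_Icc]
    omega

def natLucasMatrix (q : ℕ × ℤ × ℤ) : Matrix (Fin 3) (Fin 3) ℕ :=
  (lucasMatrix (q.1 : ℤ) q.2.1 q.2.2).map Int.toNat

theorem isBoundedMagicSquare3_natLucasMatrix {t : ℕ} {q : ℕ × ℤ × ℤ}
    (hq : q ∈ signedLucasTriples t) : IsBoundedMagicSquare3 t (natLucasMatrix q) := by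
  obtain ⟨c, a, b⟩ := q
  rw [mem_signedLucasTriples] at hq
  simp only [IsBoundedMagicSquare3, natLucasMatrix, lucasMatrix, Matrix.map_apply,
    Matrix.of_apply, Fin.sum_univ_three]
  refine ⟨fun i j => ?_, ?_, 3 * c, fun i => ?_, fun j => ?_, ?_, ?_⟩
  · fin_cases i <;> fin_cases j <;>
      simp only [Fin.zero_eta, Fin.mk_one, Fin.reduceFinMk, Matrix.cons_val,
        Matrix.cons_val_zero, Matrix.cons_val_one] <;> omega
  · rintro ⟨i, j⟩ ⟨k, l⟩ h
    fin_cases i <;> fin_cases j <;> fin_cases k <;> fin_cases l <;>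
      simp only [Fin.zero_eta, Fin.mk_one, Fin.reduceFinMk, Matrix.cons_val,
        Matrix.cons_val_zero, Matrix.cons_val_one] at h ⊢ <;>
      first | rfl | (simp only [Prod.mk.injEq, Fin.reduceEq]; omega)
  · fin_cases i <;>
      simp only [Fin.zero_eta, Fin.mk_one, Fin.reduceFinMk, Matrix.cons_val,
        Matrix.cons_val_zero, Matrix.cons_val_one] <;> omega
  · fin_cases j <;>
      simp only [Fin.zero_eta, Fin.mk_one, Fin.reduceFinMk, Matrix.cons_val,
        Matrix.cons_val_zero, Matrix.cons_val_one] <;> omega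
  · simp only [Matrix.cons_val, Matrix.cons_val_zero, Matrix.cons_val_one]
    omega
  · simp only [Matrix.cons_val, Matrix.cons_val_zero, Matrix.cons_val_one]
    omega

theorem exists_natLucasMatrix_eq {t : ℕ} {M : Matrix (Fin 3) (Fin 3) ℕ}
    (hM : IsBoundedMagicSquare3 t M) : ∃ q ∈ signedLucasTriples t, natLucasMatrix q = M := by
  obtain ⟨hbound, hinj, s, hrow, hcol, hdiag, hanti⟩ := hM
  have hlucas := eq_lucasMatrix (M := M.map ((↑) : ℕ → ℤ)) (s := s)
    (fun i => by simpa using congrArg ((↑) : ℕ → ℤ) (hrow i))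
    (fun j => by simpa using congrArg ((↑) : ℕ → ℤ) (hcol j))
    (by simpa using congrArg ((↑) : ℕ → ℤ) hdiag)
    (by simpa using congrArg ((↑) : ℕ → ℤ) hanti)
  have he (i j : Fin 3) :
      (M i j : ℤ) = lucasMatrix (M 1 1 : ℤ) (M 0 0 - M 1 1) (M 0 2 - M 1 1) i j :=
    congrFun (congrFun hlucas i) j
  have hne (i j k l : Fin 3) (h : (i, j) ≠ (k, l) := by decide) : M i j ≠ M k l :=
    fun e => h (hinj e)
  refine ⟨(M 1 1, (M 0 0 : ℤ) - M 1 1, (M 0 2 : ℤ) - M 1 1), ?_, ?_⟩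
  · have := he 0 1
    have := he 1 0
    have := he 1 2
    have := he 2 0
    have := he 2 1
    have := he 2 2
    simp only [lucasMatrix, Matrix.of_apply, Matrix.cons_val', Matrix.cons_val,
      Matrix.cons_val_zero, Matrix.cons_val_one, Matrix.empty_val', Matrix.cons_val_fin_one] at *
    have := hbound 0 1
    have := hbound 1 0
    have := hbound 1 2
    have := hbound 2 1
    -- the coincidences forced by `a = 0`, `b = 0`, `a = b`, `a = -b`, `b = 2a`, `b = -2a`,
    -- `a = 2b`, `a = -2b`
    have := hne 0 0 1 1
    have := hne 0 2 1 1
    have := hne 0 0 0 2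
    have := hne 0 0 2 0
    have := hne 1 0 0 0
    have := hne 2 1 2 2
    have := hne 1 2 0 2
    have := hne 0 1 0 2
    rw [mem_signedLucasTriples]
    omega
  · ext i j
    rw [natLucasMatrix, Matrix.map_apply, ← he, Int.toNat_natCast]

theorem injOn_natLucasMatrix (t : ℕ) : Set.InjOn natLucasMatrix (signedLucasTriples t) := by
  rintro ⟨c, a, b⟩ hq ⟨c', a', b'⟩ hq' h
  rw [mem_coe, mem_signedLucasTriples] at hq hq'
  have h11 := congrFun (congrFun h 1) 1
  have h00 := congrFun (congrFun h 0) 0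
  have h02 := congrFun (congrFun h 0) 2
  simp only [natLucasMatrix, lucasMatrix, Matrix.map_apply, Matrix.of_apply, Matrix.cons_val',
    Matrix.cons_val, Matrix.cons_val_zero, Matrix.cons_val_one, Matrix.cons_val_fin_one,
    Int.toNat_natCast] at h11 h00 h02
  simp only [Prod.mk.injEq]
  omega

theorem c3_eq_card_signedLucasTriples (t : ℕ) : c3 t = #(signedLucasTriples t) := by
  have hset : {M | IsBoundedMagicSquare3 t M} = natLucasMatrix '' signedLucasTriples t := by
    ext M
    refine ⟨exists_natLucasMatrix_eq, ?_⟩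
    rintro ⟨q, hq, rfl⟩
    exact isBoundedMagicSquare3_natLucasMatrix hq
  rw [c3, hset, (injOn_natLucasMatrix t).ncard_image, Set.ncard_coe_finset]

def lineParams (d t : ℕ) : Finset (ℕ × ℕ) :=
  {p ∈ range t ×ˢ range t | 0 < p.2 ∧ d * p.2 < p.1 ∧ p.1 + d * p.2 < t}

theorem mem_lineParams {d t : ℕ} (hd : 0 < d) {p : ℕ × ℕ} :
    p ∈ lineParams d t ↔ 0 < p.2 ∧ d * p.2 < p.1 ∧ p.1 + d * p.2 < t := by
  have : p.2 ≤ d * p.2 := Nat.le_mul_of_pos_left _ hd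
  simp only [lineParams, mem_filter, mem_product, mem_range]
  omega

theorem card_lucasTriples_eq_distinct_add_lines (t : ℕ) :
    #(lucasTriples t) =
      #(distinctLucasTriples t) + #(lineParams 2 t) + 2 * #(lineParams 3 t) := by
  set s := lucasTriples t
  -- on `lucasTriples` at most one of the lines `y = x`, `y = 2x`, `x = 2y` can hold
  have hsplit : #s = #{p ∈ s | p.2.1 ≠ p.2.2 ∧ p.2.2 ≠ 2 * p.2.1 ∧ p.2.1 ≠ 2 * p.2.2} +
      #{p ∈ s | p.2.1 = p.2.2} + #{p ∈ s | p.2.2 = 2 * p.2.1} +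
      #{p ∈ s | p.2.1 = 2 * p.2.2} := by
    rw [card_filter, card_filter, card_filter, card_filter, ← sum_add_distrib, ← sum_add_distrib,
      ← sum_add_distrib, card_eq_sum_ones]
    refine sum_congr rfl fun p hp => ?_
    rw [mem_lucasTriples] at hp
    split_ifs <;> omega
  have h1 : #{p ∈ s | p.2.1 = p.2.2} = #(lineParams 2 t) := by
    refine card_nbij' (fun p => (p.1, p.2.1)) (fun q => (q.1, q.2, q.2)) ?_ ?_ ?_ ?_ <;>
      intro p hp <;>
      simp only [s, coe_filter, Set.mem_ofPred_eq, SetLike.mem_coe, mem_lucasTriples,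
        mem_lineParams two_pos, Prod.ext_iff, and_true, true_and] at hp ⊢ <;>
      omega
  have h2 : #{p ∈ s | p.2.2 = 2 * p.2.1} = #(lineParams 3 t) := by
    refine card_nbij' (fun p => (p.1, p.2.1)) (fun q => (q.1, q.2, 2 * q.2)) ?_ ?_ ?_ ?_ <;>
      intro p hp <;>
      simp only [s, coe_filter, Set.mem_ofPred_eq, SetLike.mem_coe, mem_lucasTriples,
        mem_lineParams three_pos, Prod.ext_iff, and_true, true_and] at hp ⊢ <;>
      omega
  have h3 : #{p ∈ s | p.2.1 = 2 * p.2.2} = #(lineParams 3 t) := by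
    refine card_nbij' (fun p => (p.1, p.2.2)) (fun q => (q.1, 2 * q.2, q.2)) ?_ ?_ ?_ ?_ <;>
      intro p hp <;>
      simp only [s, coe_filter, Set.mem_ofPred_eq, SetLike.mem_coe, mem_lucasTriples,
        mem_lineParams three_pos, Prod.ext_iff, and_true, true_and] at hp ⊢ <;>
      omega
  rw [hsplit, h1, h2, h3, distinctLucasTriples]
  ring

theorem card_lineParams_add (d t : ℕ) (hd : 0 < d) :
    #(lineParams d (t + 2 * d)) = #(lineParams d t) + (t - 1) := by
  rw [← card_filter_add_card_filter_not (p := fun p : ℕ × ℕ => p.2 = 1), add_comm]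
  congr 1
  · refine card_nbij' (fun p => (p.1 - d, p.2 - 1)) (fun p => (p.1 + d, p.2 + 1)) ?_ ?_ ?_ ?_ <;>
      rintro ⟨c, _ | x⟩ <;>
      simp only [coe_filter, Set.mem_ofPred_eq, SetLike.mem_coe, mem_lineParams hd, mul_add_one,
        add_tsub_cancel_right, Prod.mk.injEq, and_true, not_true_eq_false, implies_true] <;>
      omega
  · rw [show t - 1 = #(Ioo d (t + d)) by simp]
    refine card_nbij' Prod.fst (fun c => (c, 1)) ?_ ?_ ?_ ?_ <;>
      rintro ⟨c, x⟩ <;>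
      simp only [coe_filter, Set.mem_ofPred_eq, coe_Ioo, Set.mem_Ioo, mem_lineParams hd,
        Prod.mk.injEq] <;>
      grind

theorem card_lucasTriples_add_two (t : ℕ) :
    #(lucasTriples (t + 2)) = #(lucasTriples t) + #(lineParams 1 t) := by
  rw [← card_filter_add_card_filter_not (p := fun p : ℕ × ℕ × ℕ => p.2.1 = 1), add_comm]
  congr 1
  · refine card_nbij' (fun p => (p.1 - 1, p.2.1 - 1, p.2.2))
      (fun p => (p.1 + 1, p.2.1 + 1, p.2.2)) ?_ ?_ ?_ ?_ <;>
      intro p <;>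
      simp only [coe_filter, Set.mem_ofPred_eq, SetLike.mem_coe, mem_lucasTriples,
        Prod.ext_iff, and_true] <;>
      omega
  · refine card_nbij' (fun p => (p.1 - 1, p.2.2)) (fun p => (p.1 + 1, 1, p.2)) ?_ ?_ ?_ ?_ <;>
      intro p <;>
      simp only [coe_filter, Set.mem_ofPred_eq, SetLike.mem_coe, mem_lucasTriples,
        mem_lineParams one_pos, one_mul, Prod.ext_iff, and_true] <;>
      omega

theorem card_lineParams_one (m : ℕ) : #(lineParams 1 (2 * m + 2)) = m ^ 2 := by
  induction m with
  | zero => rfl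
  | succ m ih =>
    rw [show 2 * (m + 1) + 2 = 2 * m + 2 + 2 * 1 by ring, card_lineParams_add _ _ one_pos, ih,
      show 2 * m + 2 - 1 = 2 * m + 1 by omega]
    ring

theorem card_lineParams_two (m : ℕ) : 2 * #(lineParams 2 (2 * m + 4)) = (m + 1) * m := by
  induction m using Nat.twoStepInduction with
  | zero => rfl
  | one => rfl
  | more m ih _ =>
    rw [show 2 * (m + 2) + 4 = 2 * m + 4 + 2 * 2 by ring, card_lineParams_add _ _ two_pos,
      show 2 * m + 4 - 1 = 2 * m + 3 by omega, mul_add, ih]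
    ring

theorem card_lineParams_three (r : ℕ) : #(lineParams 3 (6 * r + 4)) = 3 * r ^ 2 := by
  induction r with
  | zero => rfl
  | succ r ih =>
    rw [show 6 * (r + 1) + 4 = 6 * r + 4 + 2 * 3 by ring, card_lineParams_add _ _ three_pos, ih,
      show 6 * r + 4 - 1 = 6 * r + 3 by omega]
    ring

theorem card_lucasTriples (m : ℕ) :
    6 * #(lucasTriples (2 * m + 4)) = (m + 1) * m * (2 * m + 1) := by
  induction m with
  | zero => rfl
  | succ m ih =>
    have hline := card_lineParams_one (m + 1)
    rw [show 2 * (m + 1) + 2 = 2 * m + 4 by ring] at hline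
    rw [show 2 * (m + 1) + 4 = 2 * m + 4 + 2 by ring, card_lucasTriples_add_two, hline, mul_add,
      ih]
    ring

theorem c3_formula_mod12_4_10_general (t : ℕ) (h : t % 12 = 4 ∨ t % 12 = 10) :
    (c3 t : ℚ) = ((t : ℚ) ^ 3 - 16 * (t : ℚ) ^ 2 + 76 * (t : ℚ) - 112) / 6 := by
  obtain ⟨r, rfl⟩ : ∃ r, t = 6 * r + 4 := ⟨t / 6, by omega⟩
  have hc3 : c3 (6 * r + 4) = 4 * #(distinctLucasTriples (6 * r + 4)) := by
    rw [c3_eq_card_signedLucasTriples, card_signedLucasTriples]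
  have hsplit := card_lucasTriples_eq_distinct_add_lines (6 * r + 4)
  have hall := card_lucasTriples (3 * r)
  have hline2 := card_lineParams_two (3 * r)
  have hline3 := card_lineParams_three r
  rw [show 2 * (3 * r) + 4 = 6 * r + 4 by ring] at hall hline2
  rw [hc3]
  qify at hsplit hall hline2 hline3
  push_cast
  linear_combination -4 * hsplit + 2 / 3 * hall - 2 * hline2 - 8 * hline3

theorem c3_formula_mod12_4_10 (t : ℕ) (ht : 0 < t) (h : t % 12 = 4 ∨ t % 12 = 10) :
    (c3 t : ℚ) = ((t : ℚ) ^ 3 - 16 * (t : ℚ) ^ 2 + 76 * (t : ℚ) - 112) / 6 :=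
  c3_formula_mod12_4_10_general t h
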